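/- arXiv:0705.4000 — 4 statements merged into one kernel-verified Lean document; each statement's English description precedes it below -/
import Mathlib

section
/- If A_{abc} is a symmetric n×n×n array (A_{abc} = A_{σ(a)σ(b)σ(c)} for every permutation σ of the three indices), then ∑_{1≤a,b,c≤n} A_{abc} = ∑_{k=1}^n ( 3∑_{b,c=1}^k A_{kbc} − 3∑_{a=1}^k A_{akk} + A_{kkk} ). -/
theorem stmt_4 (n : ℕ) (A : ℕ → ℕ → ℕ → ℂ)
    (hsym : ∀ (a b c : ℕ) (σ : Equiv.Perm (Fin 3)),
      A a b c = A (![a, b, c] (σ 0)) (![a, b, c] (σ 1)) (![a, b, c] (σ 2))) :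
    ∑ a ∈ Finset.Icc 1 n, ∑ b ∈ Finset.Icc 1 n, ∑ c ∈ Finset.Icc 1 n, A a b c =
    ∑ k ∈ Finset.Icc 1 n,
      (3 * ∑ b ∈ Finset.Icc 1 k, ∑ c ∈ Finset.Icc 1 k, A k b c
        - 3 * ∑ a ∈ Finset.Icc 1 k, A a k k
        + A k k k) := by
  have h12 : ∀ a b c, A a b c = A b a c := fun a b c => by
    simpa [Equiv.swap_apply_def] using hsym a b c (Equiv.swap 0 1)
  have h23 : ∀ a b c, A a b c = A a c b := fun a b c => by
    simpa [Equiv.swap_apply_def] using hsym a b c (Equiv.swap 1 2)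
  have h13 : ∀ a b c, A a b c = A c b a := fun a b c => by
    simpa [Equiv.swap_apply_def] using hsym a b c (Equiv.swap 0 2)
  induction n with
  | zero => simp
  | succ n ih =>
    have hle : (1:ℕ) ≤ n + 1 := by omega
    rw [Finset.sum_Icc_succ_top hle, Finset.sum_Icc_succ_top hle]
    have e1 : ∀ a ∈ Finset.Icc 1 n,
        (∑ b ∈ Finset.Icc 1 (n+1), ∑ c ∈ Finset.Icc 1 (n+1), A a b c) =
        (∑ b ∈ Finset.Icc 1 n, ∑ c ∈ Finset.Icc 1 n, A a b c)
        + (∑ b ∈ Finset.Icc 1 n, A a b (n+1))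
        + (∑ c ∈ Finset.Icc 1 n, A a (n+1) c) + A a (n+1) (n+1) := by
      intro a _
      simp only [Finset.sum_Icc_succ_top hle, Finset.sum_add_distrib]
      ring
    rw [Finset.sum_congr rfl e1]
    simp only [Finset.sum_add_distrib, ih, Finset.sum_Icc_succ_top hle,
      Finset.sum_add_distrib, mul_add]
    have s1 : (∑ b ∈ Finset.Icc 1 n, A (n+1) b (n+1)) = ∑ a ∈ Finset.Icc 1 n, A a (n+1) (n+1) :=
      Finset.sum_congr rfl (fun b _ => h12 (n+1) b (n+1))
    have s2 : (∑ c ∈ Finset.Icc 1 n, A (n+1) (n+1) c) = ∑ a ∈ Finset.Icc 1 n, A a (n+1) (n+1) :=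
      Finset.sum_congr rfl (fun c _ => h13 (n+1) (n+1) c)
    have s3 : (∑ a ∈ Finset.Icc 1 n, ∑ b ∈ Finset.Icc 1 n, A a b (n+1))
        = ∑ b ∈ Finset.Icc 1 n, ∑ c ∈ Finset.Icc 1 n, A (n+1) b c := by
      rw [Finset.sum_comm]
      exact Finset.sum_congr rfl fun b _ => Finset.sum_congr rfl fun a _ => h13 a b (n+1)
    have s4 : (∑ a ∈ Finset.Icc 1 n, ∑ c ∈ Finset.Icc 1 n, A a (n+1) c)
        = ∑ b ∈ Finset.Icc 1 n, ∑ c ∈ Finset.Icc 1 n, A (n+1) b c := by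
      refine Finset.sum_congr rfl fun a _ => Finset.sum_congr rfl fun c _ => ?_
      exact h12 a (n+1) c
    rw [s1, s2, s3, s4]
    ring
end

section
/- For a real number s > 1, the series ∑_{k=1}^∞ ( ζ_k(s)²/k^s − ζ_k(s)/k^{2s} ) converges and equals (ζ(s)³ − ζ(3s))/3, where ζ_k(s) = ∑_{j=1}^k j^{−s} and ζ is the Riemann zeta function. -/
set_option maxHeartbeats 1000000

open Filter Finset Topology

theorem stmt_6 (s : ℝ) (hs : 1 < s) :
    HasSum (fun k : ℕ =>
      ((∑ j ∈ Finset.Icc 1 (k + 1), (j : ℂ) ^ (-(s : ℂ))) ^ 2 / ((k + 1 : ℕ) : ℂ) ^ (s : ℂ)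
        - (∑ j ∈ Finset.Icc 1 (k + 1), (j : ℂ) ^ (-(s : ℂ))) / ((k + 1 : ℕ) : ℂ) ^ (2 * (s : ℂ))))
      ((riemannZeta s ^ 3 - riemannZeta (3 * s)) / 3) := by
  have hsre : 1 < (s : ℂ).re := by simpa using hs
  have h3sre : 1 < ((3 * s : ℝ) : ℂ).re := by simpa using by linarith
  set a : ℕ → ℂ := fun n => (n : ℂ) ^ (-(s : ℂ)) with ha
  set S : ℕ → ℂ := fun N => ∑ j ∈ Finset.Icc 1 N, a j with hS
  set f : ℕ → ℂ := fun k =>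
      ((∑ j ∈ Finset.Icc 1 (k + 1), (j : ℂ) ^ (-(s : ℂ))) ^ 2 / ((k + 1 : ℕ) : ℂ) ^ (s : ℂ)
        - (∑ j ∈ Finset.Icc 1 (k + 1), (j : ℂ) ^ (-(s : ℂ))) / ((k + 1 : ℕ) : ℂ) ^ (2 * (s : ℂ)))
    with hf
  have ha0 : a 0 = 0 := by
    simp only [ha, Nat.cast_zero]
    exact Complex.zero_cpow (neg_ne_zero.mpr (Complex.ne_zero_of_one_lt_re hsre))
  -- rewrite f in terms of a and S
  have hfeq : ∀ k, f k = (S (k + 1)) ^ 2 * a (k + 1) - S (k + 1) * (a (k + 1)) ^ 2 := by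
    intro k
    have h2 : ((k + 1 : ℕ) : ℂ) ^ (2 * (s : ℂ)) = (((k + 1 : ℕ) : ℂ) ^ (s : ℂ)) ^ 2 := by
      rw [show (2 : ℂ) * (s : ℂ) = ((2 : ℕ) : ℂ) * (s : ℂ) by norm_num, Complex.cpow_nat_mul]
    have hinv : a (k + 1) = (((k + 1 : ℕ) : ℂ) ^ (s : ℂ))⁻¹ := by
      simp [ha, Complex.cpow_neg]
    simp only [hf, hS, h2, hinv]
    push_cast
    ring
  -- summability
  have hsum_a : Summable a := by
    have := Complex.summable_one_div_nat_cpow.mpr hsre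
    simpa [ha, Complex.cpow_neg, one_div] using this
  have hnorm_a : Summable fun n => ‖a n‖ := summable_norm_iff.mpr hsum_a
  have hzeta : HasSum a (riemannZeta s) := by
    have h := (Complex.summable_one_div_nat_cpow.mpr hsre).hasSum
    rw [← zeta_eq_tsum_one_div_nat_cpow hsre] at h
    simpa [ha, Complex.cpow_neg, one_div] using h
  have hcube : ∀ n : ℕ, (a n) ^ 3 = (n : ℂ) ^ (-((3 * s : ℝ) : ℂ)) := by
    intro n
    rw [ha, ← Complex.cpow_nat_mul]
    congr 1
    push_cast
    ring
  have hzeta3 : HasSum (fun n => (a n) ^ 3) (riemannZeta (3 * s)) := by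
    have h := (Complex.summable_one_div_nat_cpow.mpr h3sre).hasSum
    rw [← zeta_eq_tsum_one_div_nat_cpow h3sre] at h
    have : (fun n : ℕ => (a n) ^ 3) = fun n : ℕ => 1 / (n : ℂ) ^ ((3 * s : ℝ) : ℂ) := by
      funext n; rw [hcube n, Complex.cpow_neg, one_div]
    rw [this]
    exact_mod_cast h
  -- bound on partial sums
  set B : ℝ := ∑' n, ‖a n‖ with hB
  have hSB : ∀ N, ‖S N‖ ≤ B := by
    intro N
    refine le_trans (norm_sum_le _ _) ?_
    exact Summable.sum_le_tsum _ (fun i _ => norm_nonneg _) hnorm_a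
  have hB0 : 0 ≤ B := tsum_nonneg fun _ => norm_nonneg _
  have ha_le_one : ∀ k : ℕ, ‖a (k + 1)‖ ≤ 1 := by
    intro k
    rw [ha, Complex.norm_natCast_cpow_of_pos (Nat.succ_pos k)]
    exact Real.rpow_le_one_of_one_le_of_nonpos (by exact_mod_cast Nat.one_le_iff_ne_zero.mpr (Nat.succ_ne_zero k)) (by simpa using by linarith)
  clear_value a S f B
  -- norm summability of f
  have hnorm_f : Summable fun k => ‖f k‖ := by
    refine Summable.of_nonneg_of_le (fun k => norm_nonneg _)
      (fun k => ?_) (((summable_nat_add_iff 1).mpr hnorm_a).mul_left (B ^ 2 + B))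
    rw [hfeq k]
    calc ‖S (k+1) ^ 2 * a (k+1) - S (k+1) * a (k+1) ^ 2‖
        ≤ ‖S (k+1) ^ 2 * a (k+1)‖ + ‖S (k+1) * a (k+1) ^ 2‖ := norm_sub_le _ _
      _ = ‖S (k+1)‖^2 * ‖a (k+1)‖ + ‖S (k+1)‖ * (‖a (k+1)‖ * ‖a (k+1)‖) := by
          simp [norm_mul, norm_pow, sq, mul_assoc]
      _ ≤ B^2 * ‖a (k+1)‖ + B * (1 * ‖a (k+1)‖) := by
          gcongr <;> first
            | exact hSB _ | exact ha_le_one _ | exact norm_nonneg _ | exact hB0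
      _ = (B^2 + B) * ‖a (k+1)‖ := by ring
  rw [hasSum_iff_tendsto_nat_of_summable_norm hnorm_f]
  -- partial sums formula
  have key : ∀ N, ∑ k ∈ Finset.range N, f k
      = ((S N) ^ 3 - ∑ j ∈ Finset.Icc 1 N, (a j) ^ 3) / 3 := by
    intro N
    induction N with
    | zero => simp [hS]
    | succ N ih =>
        rw [Finset.sum_range_succ, ih, hfeq N]
        have h1 : S (N + 1) = S N + a (N + 1) := by
          rw [hS]; exact Finset.sum_Icc_succ_top (Nat.one_le_iff_ne_zero.mpr (Nat.succ_ne_zero N)) a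
        have h2 : ∑ j ∈ Finset.Icc 1 (N + 1), (a j) ^ 3
            = (∑ j ∈ Finset.Icc 1 N, (a j) ^ 3) + (a (N + 1)) ^ 3 :=
          Finset.sum_Icc_succ_top (Nat.one_le_iff_ne_zero.mpr (Nat.succ_ne_zero N)) _
        rw [h1, h2]
        ring
  simp only [key]
  -- limits
  have hzeta' : HasSum (fun n => a (n + 1)) (riemannZeta s) := by
    refine (hasSum_nat_add_iff (f := a) 1).mpr ?_
    simpa [ha0] using hzeta
  have hzeta3' : HasSum (fun n => (a (n + 1)) ^ 3) (riemannZeta (3 * s)) := by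
    refine (hasSum_nat_add_iff (f := fun n => (a n) ^ 3) 1).mpr ?_
    simpa [ha0] using hzeta3
  have hSrange : ∀ N, S N = ∑ k ∈ Finset.range N, a (k + 1) := by
    intro N
    induction N with
    | zero => simp [hS]
    | succ N ih =>
        simp only [hS]
        rw [Finset.sum_Icc_succ_top (Nat.one_le_iff_ne_zero.mpr (Nat.succ_ne_zero N)) a,
          Finset.sum_range_succ, ← ih]
        simp [hS]
  have hTrange : ∀ N, (∑ j ∈ Finset.Icc 1 N, (a j) ^ 3)
      = ∑ k ∈ Finset.range N, (a (k + 1)) ^ 3 := by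
    intro N
    induction N with
    | zero => simp
    | succ N ih =>
        rw [Finset.sum_Icc_succ_top (Nat.one_le_iff_ne_zero.mpr (Nat.succ_ne_zero N)) _,
          Finset.sum_range_succ, ← ih]
  have hTS : Tendsto S atTop (𝓝 (riemannZeta s)) := by
    have := hzeta'.tendsto_sum_nat
    simpa [← hSrange] using this
  have hTT : Tendsto (fun N => ∑ j ∈ Finset.Icc 1 N, (a j) ^ 3) atTop
      (𝓝 (riemannZeta (3 * s))) := by
    have := hzeta3'.tendsto_sum_nat
    simpa [← hTrange] using this
  have : Tendsto (fun N => ((S N) ^ 3 - ∑ j ∈ Finset.Icc 1 N, (a j) ^ 3) / 3) atTop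
      (𝓝 ((riemannZeta s ^ 3 - riemannZeta (3 * s)) / 3)) :=
    ((hTS.pow 3).sub hTT).div_const 3
  simpa using this
end

section
/- For every positive integer n, ∑_{k=1}^n ( (Ψ(k+1)+γ)²/k − (Ψ(k+1)+γ)/k² ) = ((Ψ(n+1)+γ)³ − ζ_n(3))/3, where ζ_n(3) = ∑_{k=1}^n 1/k³. -/
/-- The digamma function `Ψ = (log ∘ Γ)'` on the reals. -/
noncomputable def digamma (x : ℝ) : ℝ := deriv (fun y => Real.log (Real.Gamma y)) x

lemma digamma_nat_add_one (k : ℕ) :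
    digamma (k + 1) = -Real.eulerMascheroniConstant + (harmonic k : ℝ) := by
  unfold digamma
  have h1 : DifferentiableAt ℝ Real.Gamma ((k : ℝ) + 1) :=
    Real.differentiableAt_Gamma fun m ↦ by
      have h0 : (0:ℝ) ≤ (m:ℝ) := m.cast_nonneg
      have h1 : (0:ℝ) ≤ (k:ℝ) := k.cast_nonneg
      intro h; linarith
  rw [deriv.log h1 (Real.Gamma_pos_of_pos (by positivity)).ne', Real.deriv_Gamma_nat,
    Real.Gamma_nat_eq_factorial]
  exact mul_div_cancel_left₀ _ (by positivity : ((Nat.factorial k) : ℝ) ≠ 0)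

lemma aux_sum (n : ℕ) :
    ∑ k ∈ Finset.Icc 1 n,
      ((harmonic k : ℝ) ^ 2 / k - (harmonic k : ℝ) / k ^ 2) =
    ((harmonic n : ℝ) ^ 3 - ∑ j ∈ Finset.Icc 1 n, (1 : ℝ) / j ^ 3) / 3 := by
  induction n with
  | zero => simp
  | succ n ih =>
    rw [Finset.sum_Icc_succ_top (Nat.one_le_iff_ne_zero.mpr n.succ_ne_zero),
      Finset.sum_Icc_succ_top (Nat.one_le_iff_ne_zero.mpr n.succ_ne_zero), ih,
      harmonic_succ]
    have hpos : (0:ℝ) < (n:ℝ) + 1 := by positivity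
    push_cast
    field_simp
    ring

theorem stmt_9 (n : ℕ) (hn : 0 < n) :
    ∑ k ∈ Finset.Icc 1 n,
      ((digamma (k + 1) + Real.eulerMascheroniConstant) ^ 2 / k
        - (digamma (k + 1) + Real.eulerMascheroniConstant) / k ^ 2) =
    ((digamma (n + 1) + Real.eulerMascheroniConstant) ^ 3
      - ∑ j ∈ Finset.Icc 1 n, (1 : ℝ) / j ^ 3) / 3 := by
  simp only [digamma_nat_add_one, neg_add_cancel_comm]
  exact aux_sum n
end

section
/- Fix integers t ≥ 2 and a complex number s, and set ζ_n(s) = ∑_{k=1}^n k^{−s}. Then for every positive integer n, ∑_{k=1}^n ∑_{m=1}^{t−1} (−1)^{m−1} C(t,m) k^{−ms} ζ_k(s)^{t−m} = ζ_n(s)^t + (−1)^t ζ_n(ts). -/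
theorem stmt_16 (t : ℕ) (ht : 2 ≤ t) (s : ℂ) (n : ℕ) (hn : 0 < n) :
    ∑ k ∈ Finset.Icc 1 n, ∑ m ∈ Finset.Icc 1 (t - 1),
      (-1 : ℂ) ^ (m - 1) * (t.choose m : ℂ) * (k : ℂ) ^ (-(m : ℂ) * s)
        * (∑ j ∈ Finset.Icc 1 k, (j : ℂ) ^ (-s)) ^ (t - m) =
    (∑ j ∈ Finset.Icc 1 n, (j : ℂ) ^ (-s)) ^ t
      + (-1 : ℂ) ^ t * ∑ j ∈ Finset.Icc 1 n, (j : ℂ) ^ (-((t : ℂ) * s)) := by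
  set Z : ℕ → ℂ := fun k => ∑ j ∈ Finset.Icc 1 k, (j : ℂ) ^ (-s) with hZ
  have key : ∀ k : ℕ, (∑ m ∈ Finset.Icc 1 (t - 1),
      (-1 : ℂ) ^ (m - 1) * (t.choose m : ℂ) * ((k+1 : ℕ) : ℂ) ^ (-(m : ℂ) * s)
        * Z (k+1) ^ (t - m)) =
      Z (k+1) ^ t - Z k ^ t + (-1) ^ t * ((k+1 : ℕ) : ℂ) ^ (-((t : ℂ) * s)) := by
    intro k
    set a : ℂ := ((k+1 : ℕ) : ℂ) ^ (-s) with ha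
    have hZk : Z (k+1) = Z k + a := by
      show (∑ j ∈ Finset.Icc 1 (k+1), (j:ℂ)^(-s)) = (∑ j ∈ Finset.Icc 1 k, (j:ℂ)^(-s)) + a
      rw [Finset.sum_Icc_succ_top (Nat.le_add_left 1 k), ha]
    have hpow : ∀ m : ℕ, ((k+1 : ℕ) : ℂ) ^ (-(m : ℂ) * s) = a ^ m := by
      intro m
      rw [ha, ← Complex.cpow_nat_mul]
      ring_nf
    have hbin : (Z (k+1) - a) ^ t = ∑ m ∈ Finset.range (t+1),
        (-a) ^ m * Z (k+1) ^ (t - m) * (t.choose m : ℂ) := by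
      rw [sub_eq_add_neg, add_comm]
      exact add_pow (-a) (Z (k+1)) t
    have hZk' : Z (k+1) - a = Z k := by rw [hZk]; ring
    -- split the range sum
    obtain ⟨u, hu⟩ : ∃ u, t = u + 2 := ⟨t - 2, by omega⟩
    have hsplit : ∑ m ∈ Finset.range (t+1),
        (-a) ^ m * Z (k+1) ^ (t - m) * (t.choose m : ℂ)
        = Z (k+1) ^ t + (∑ m ∈ Finset.Icc 1 (t-1),
            (-a) ^ m * Z (k+1) ^ (t - m) * (t.choose m : ℂ)) + (-a) ^ t := by
      have h1 : Finset.Icc 1 (t-1) = Finset.Ioo 0 t := by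
        ext x; simp [Finset.mem_Icc, Finset.mem_Ioo]; omega
      have h2 : Finset.range (t+1) = Finset.Icc 0 t := by
        ext x; simp [Finset.mem_Icc, Finset.mem_range]
      rw [h1, h2]
      have h3 : Finset.Icc 0 t = insert 0 (insert t (Finset.Ioo 0 t)) := by
        ext x; simp [Finset.mem_Icc, Finset.mem_Ioo]; omega
      rw [h3, Finset.sum_insert (by simp [Finset.mem_Ioo]; omega),
        Finset.sum_insert (by simp [Finset.mem_Ioo])]
      simp
      ring
    have hinner : (∑ m ∈ Finset.Icc 1 (t - 1),
        (-1 : ℂ) ^ (m - 1) * (t.choose m : ℂ) * ((k+1 : ℕ) : ℂ) ^ (-(m : ℂ) * s)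
          * Z (k+1) ^ (t - m))
        = -∑ m ∈ Finset.Icc 1 (t-1),
            (-a) ^ m * Z (k+1) ^ (t - m) * (t.choose m : ℂ) := by
      rw [← Finset.sum_neg_distrib]
      refine Finset.sum_congr rfl fun m hm => ?_
      have hm1 : 1 ≤ m := (Finset.mem_Icc.mp hm).1
      rw [hpow m]
      have : (-1 : ℂ) ^ (m-1) = -(-1:ℂ)^m := by
        obtain ⟨v, hv⟩ : ∃ v, m = v + 1 := ⟨m - 1, by omega⟩
        subst hv; simp [pow_succ]
      rw [this, neg_pow]
      ring
    rw [hinner]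
    have := hbin
    rw [hZk', hsplit] at this
    have hat : (-a) ^ t = (-1)^t * ((k+1:ℕ):ℂ) ^ (-((t:ℂ)*s)) := by
      rw [neg_pow, ha, ← Complex.cpow_nat_mul]
      ring_nf
    rw [hat] at this
    linear_combination this
  -- telescoping
  obtain ⟨N, hN⟩ : ∃ N, n = N + 1 := ⟨n - 1, by omega⟩
  subst hN
  have htel : ∑ k ∈ Finset.Icc 1 (N+1), ∑ m ∈ Finset.Icc 1 (t - 1),
      (-1 : ℂ) ^ (m - 1) * (t.choose m : ℂ) * (k : ℂ) ^ (-(m : ℂ) * s)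
        * Z k ^ (t - m)
      = ∑ k ∈ Finset.range (N+1),
        (Z (k+1) ^ t - Z k ^ t + (-1) ^ t * ((k+1 : ℕ) : ℂ) ^ (-((t : ℂ) * s))) := by
    rw [← Finset.Ico_add_one_right_eq_Icc, Finset.sum_Ico_eq_sum_range]
    simp only [Nat.succ_sub_one, Nat.add_sub_cancel]
    refine Finset.sum_congr rfl fun k hk => ?_
    rw [← key k]
    refine Finset.sum_congr rfl fun m hm => ?_
    norm_num [add_comm 1 k]
  rw [htel, Finset.sum_add_distrib, Finset.sum_sub_distrib]
  have h0 : Z 0 = 0 := by simp [hZ]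
  rw [show (∑ k ∈ Finset.range (N+1), Z (k+1)^t) - (∑ k ∈ Finset.range (N+1), Z k ^ t)
      = Z (N+1) ^ t - Z 0 ^ t from by
    rw [← Finset.sum_sub_distrib]; exact Finset.sum_range_sub (fun k => Z k ^ t) (N+1)]
  rw [h0, ← Finset.mul_sum]
  have : ∑ k ∈ Finset.range (N+1), ((k+1:ℕ):ℂ) ^ (-((t:ℂ)*s))
      = ∑ j ∈ Finset.Icc 1 (N+1), (j:ℂ) ^ (-((t:ℂ)*s)) := by
    rw [← Finset.Ico_add_one_right_eq_Icc, Finset.sum_Ico_eq_sum_range]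
    simp [add_comm 1]
  rw [this, zero_pow (by omega : t ≠ 0)]
  ring
end
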